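/- The function ι : ℍ \ ℝ → ℍ sending q = t + rI (r > 0, I² = -1) to I satisfies, at every non-real q, the slice equation (∂/∂t + ι ∂/∂r) ι = 0 (it is constant on each half-slice), and its perpendicular derivative equals 1/r, i.e., -½ Dι = 1/r where D is the left Fueter operator. -/

import Mathlib

/-!
Write `v = Im q` and `r = ‖v‖`. Moving `q` along the real axis does not change `v`, so
`∂ι/∂t = 0`. Along a direction `d`, `ι (q + s d)` is the normalization of `v + s Im d`, whose
derivative at `s = 0` is `r⁻¹ Im d - ⟪v, Im d⟫ r⁻³ v`. For `d = ι q` this vanishes, since `ι q`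
is radial. For the Fueter operator, summing `e · ∂_e ι` over `e = i, j, k` and using
`∑ ⟪v, e⟫ e = v`, `e² = -1` and `v² = -r²` gives `-3/r + r²/r³ = -2/r`.
-/

noncomputable section
open Quaternion Filter Topology
open scoped RealInnerProductSpace

def qi : ℍ[ℝ] := ⟨0, 1, 0, 0⟩
def qj : ℍ[ℝ] := ⟨0, 0, 1, 0⟩
def qk : ℍ[ℝ] := ⟨0, 0, 0, 1⟩

/-- The map `q ↦ Im(q)/|Im(q)|`, sending a non-real quaternion `q = t + rI` to `I`. -/
def iotaF (q : ℍ[ℝ]) : ℍ[ℝ] := ((‖q.im‖)⁻¹ : ℝ) • q.im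

section

variable {F : Type*} [NormedAddCommGroup F] [InnerProductSpace ℝ F] {f : ℝ → F} {f' : F} {x : ℝ}

theorem HasDerivAt.norm (hf : HasDerivAt f f' x) (hx : f x ≠ 0) :
    HasDerivAt (‖f ·‖) (⟪f x, f'⟫ / ‖f x‖) x := by
  have hsqrt := hf.norm_sq.sqrt (by positivity)
  simp only [Real.sqrt_sq (norm_nonneg _)] at hsqrt
  convert hsqrt using 1
  field_simp

theorem HasDerivAt.inv_norm_smul (hf : HasDerivAt f f' x) (hx : f x ≠ 0) :
    HasDerivAt (fun s => ‖f s‖⁻¹ • f s) (‖f x‖⁻¹ • f' - (⟪f x, f'⟫ / ‖f x‖ ^ 3) • f x) x := by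
  have hn : ‖f x‖ ≠ 0 := norm_ne_zero_iff.mpr hx
  refine (((hf.norm hx).inv hn).smul hf).congr_deriv ?_
  rw [sub_eq_add_neg, ← neg_smul]
  congr 2
  field_simp

end

theorem qi_mul_qi : qi * qi = -1 := by
  ext <;> simp [re_mul, imI_mul, imJ_mul, imK_mul] <;> simp [qi]

theorem qj_mul_qj : qj * qj = -1 := by
  ext <;> simp [re_mul, imI_mul, imJ_mul, imK_mul] <;> simp [qj]

theorem qk_mul_qk : qk * qk = -1 := by
  ext <;> simp [re_mul, imI_mul, imJ_mul, imK_mul] <;> simp [qk]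

theorem im_qi : qi.im = qi := rfl

theorem im_qj : qj.im = qj := rfl

theorem im_qk : qk.im = qk := rfl

theorem inner_smul_qi_add_inner_smul_qj_add_inner_smul_qk (q : ℍ[ℝ]) :
    ⟪q, qi⟫ • qi + ⟪q, qj⟫ • qj + ⟪q, qk⟫ • qk = q.im := by
  ext <;> simp [inner_def, re_mul] <;> simp [qi, qj, qk]

theorem im_mul_im_self (q : ℍ[ℝ]) : q.im * q.im = -((‖q.im‖ ^ 2 : ℝ) : ℍ[ℝ]) := by
  rw [← neg_neg (q.im * q.im), ← neg_mul, ← star_im, star_mul_self, normSq_eq_norm_mul_self, sq]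

theorem im_iotaF (q : ℍ[ℝ]) : (iotaF q).im = iotaF q := by
  simp [iotaF]

theorem iotaF_add_coe (q : ℍ[ℝ]) (s : ℝ) : iotaF (q + s) = iotaF q := by
  simp [iotaF]

theorem deriv_iotaF_add_coe (q : ℍ[ℝ]) : deriv (fun s : ℝ => iotaF (q + s)) 0 = 0 := by
  simp only [iotaF_add_coe, deriv_const]

theorem deriv_iotaF_add_coe_mul (q d : ℍ[ℝ]) (hq : q.im ≠ 0) :
    deriv (fun s : ℝ => iotaF (q + s * d)) 0
      = ‖q.im‖⁻¹ • d.im - (⟪q.im, d.im⟫ / ‖q.im‖ ^ 3) • q.im := by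
  have hline : HasDerivAt (fun s : ℝ => q.im + s • d.im) d.im 0 := by
    simpa using ((hasDerivAt_id (0 : ℝ)).smul_const d.im).const_add q.im
  simpa [iotaF, coe_mul_eq_smul] using (hline.inv_norm_smul (by simpa using hq)).deriv

theorem deriv_iotaF_add_coe_mul_iotaF (q : ℍ[ℝ]) (hq : q.im ≠ 0) :
    deriv (fun s : ℝ => iotaF (q + s * iotaF q)) 0 = 0 := by
  have hr : ‖q.im‖ ≠ 0 := norm_ne_zero_iff.mpr hq
  rw [deriv_iotaF_add_coe_mul q _ hq, im_iotaF, iotaF, real_inner_smul_right,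
    real_inner_self_eq_norm_sq, smul_smul, ← sub_smul]
  convert zero_smul ℝ q.im
  field_simp
  ring

theorem qi_mul_deriv_add_qj_mul_deriv_add_qk_mul_deriv_iotaF (q : ℍ[ℝ]) (hq : q.im ≠ 0) :
    qi * deriv (fun s : ℝ => iotaF (q + s * qi)) 0
        + qj * deriv (fun s : ℝ => iotaF (q + s * qj)) 0
        + qk * deriv (fun s : ℝ => iotaF (q + s * qk)) 0
      = ((-2 / ‖q.im‖ : ℝ) : ℍ[ℝ]) := by
  have hr : ‖q.im‖ ≠ 0 := norm_ne_zero_iff.mpr hq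
  simp only [deriv_iotaF_add_coe_mul q _ hq, im_qi, im_qj, im_qk]
  calc _ = ‖q.im‖⁻¹ • (qi * qi + qj * qj + qk * qk)
        - (‖q.im‖ ^ 3)⁻¹ • ((⟪q.im, qi⟫ • qi + ⟪q.im, qj⟫ • qj + ⟪q.im, qk⟫ • qk) * q.im) := by
        simp only [mul_sub, mul_smul_comm, add_mul, smul_mul_assoc, div_eq_mul_inv,
          mul_comm _ (‖q.im‖ ^ 3)⁻¹, ← smul_smul]
        module
    _ = ‖q.im‖⁻¹ • (-1 + -1 + -1) - (‖q.im‖ ^ 3)⁻¹ • -((‖q.im‖ ^ 2 : ℝ) : ℍ[ℝ]) := by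
        rw [qi_mul_qi, qj_mul_qj, qk_mul_qk, inner_smul_qi_add_inner_smul_qj_add_inner_smul_qk,
          im_idem, im_mul_im_self]
    _ = _ := by
        simp only [← coe_one, ← coe_neg, ← coe_add, ← coe_smul, ← coe_sub, smul_eq_mul, coe_inj]
        field_simp
        ring

theorem stmt_19 (q : ℍ[ℝ]) (hq : q.im ≠ 0) :
    (deriv (fun s : ℝ => iotaF (q + (s : ℍ[ℝ]))) 0
        + iotaF q * deriv (fun s : ℝ => iotaF (q + (s : ℍ[ℝ]) * iotaF q)) 0 = 0) ∧
    -((deriv (fun s : ℝ => iotaF (q + (s : ℍ[ℝ]))) 0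
        + qi * deriv (fun s : ℝ => iotaF (q + (s : ℍ[ℝ]) * qi)) 0
        + qj * deriv (fun s : ℝ => iotaF (q + (s : ℍ[ℝ]) * qj)) 0
        + qk * deriv (fun s : ℝ => iotaF (q + (s : ℍ[ℝ]) * qk)) 0) / 2)
      = (((‖q.im‖)⁻¹ : ℝ) : ℍ[ℝ]) := by
  rw [deriv_iotaF_add_coe, deriv_iotaF_add_coe_mul_iotaF q hq, mul_zero, add_zero, zero_add,
    qi_mul_deriv_add_qj_mul_deriv_add_qk_mul_deriv_iotaF q hq,
    show (2 : ℍ[ℝ]) = ((2 : ℝ) : ℍ[ℝ]) by norm_cast, ← coe_div, ← coe_neg, coe_inj]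
  refine ⟨rfl, ?_⟩
  ring
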